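/- arXiv:1710.02473 — 3 statements merged into one kernel-verified Lean document; each statement's English description precedes it below -/
import Mathlib

section
/- (Dimension-dependent strong subadditivity for the linear entropy) For any tripartite density matrix ρ_ABC on C^{d_A} ⊗ C^{d_B} ⊗ C^{d_C}, with S_L(ρ) := 1 − Tr(ρ²), the identity d_A d_B d_C · Tr(ρ_ABC²) ≥ d_A d_C Tr(ρ_AC²) + d_B d_C Tr(ρ_BC²) − d_C Tr(ρ_C²) holds, equivalently S_L(ρ_ABC) + (1/(d_A d_B)) S_L(ρ_C) ≤ (1/d_B) S_L(ρ_AC) + (1/d_A) S_L(ρ_BC) + (d_A d_B + 1 − d_A − d_B)/(d_A d_B). -/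
/-!
For a Hermitian matrix the purity is the squared Frobenius norm `‖·‖²`. On `B ⊗ C` let
`T σ = d_B σ - 𝟙_B ⊗ tr_B σ`; block by block in `C` this is `d g - (tr g) 𝟙`, whence
`‖T σ‖² = d_B (d_B ‖σ‖² - ‖tr_B σ‖²)`. Write `ρ_{aa'}` for the `A`-blocks of `ρ`, so that
`ρ_BC = ∑ a, ρ_{aa}` and `(ρ_AC)_{aa'} = tr_B ρ_{aa'}`. Since `T` is linear, Cauchy–Schwarz gives
`‖T ρ_BC‖² ≤ d_A ∑ a, ‖T ρ_{aa}‖² ≤ d_A ∑ a a', ‖T ρ_{aa'}‖²`, which unfolds to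
`d_B ‖ρ_BC‖² - ‖ρ_C‖² ≤ d_A (d_B ‖ρ‖² - ‖ρ_AC‖²)`.
-/
open Matrix BigOperators Kronecker ComplexOrder

noncomputable def purity {n : Type*} [Fintype n] (ρ : Matrix n n ℂ) : ℝ :=
  ((ρ * ρ).trace).re

def IsDensity {n : Type*} [Fintype n] (ρ : Matrix n n ℂ) : Prop :=
  ρ.PosSemidef ∧ ρ.trace = 1

noncomputable def ptraceB {m p : Type*} [Fintype p] (ρ : Matrix (m × p) (m × p) ℂ) :
    Matrix m m ℂ :=
  Matrix.of fun i j => ∑ k, ρ (i, k) (j, k)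

noncomputable def ptraceA {m p : Type*} [Fintype m] (ρ : Matrix (m × p) (m × p) ℂ) :
    Matrix p p ℂ :=
  Matrix.of fun i j => ∑ k, ρ (k, i) (k, j)

noncomputable def ptraceMid {a b c : Type*} [Fintype b]
    (ρ : Matrix (a × b × c) (a × b × c) ℂ) : Matrix (a × c) (a × c) ℂ :=
  Matrix.of fun i j => ∑ k, ρ (i.1, k, i.2) (j.1, k, j.2)

noncomputable def linEnt {n : Type*} [Fintype n] (ρ : Matrix n n ℂ) : ℝ := 1 - purity ρ

noncomputable def frobSq {m n : Type*} [Fintype m] [Fintype n] (M : Matrix m n ℂ) : ℝ :=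
  ∑ i, ∑ j, Complex.normSq (M i j)

lemma frobSq_nonneg {m n : Type*} [Fintype m] [Fintype n] (M : Matrix m n ℂ) : 0 ≤ frobSq M :=
  Finset.sum_nonneg fun _ _ => Finset.sum_nonneg fun _ _ => Complex.normSq_nonneg _

lemma Matrix.IsHermitian.purity_eq_frobSq {n : Type*} [Fintype n] {M : Matrix n n ℂ}
    (hM : M.IsHermitian) : purity M = frobSq M := by
  simp only [purity, frobSq, Matrix.trace, Matrix.diag_apply, Matrix.mul_apply, Complex.re_sum]
  refine Finset.sum_congr rfl fun i _ => Finset.sum_congr rfl fun j _ => ?_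
  rw [← hM.apply j i, Complex.star_def, Complex.mul_conj, Complex.ofReal_re]

lemma Complex.normSq_sum_le_card_mul {ι : Type*} (s : Finset ι) (f : ι → ℂ) :
    Complex.normSq (∑ i ∈ s, f i) ≤ s.card * ∑ i ∈ s, Complex.normSq (f i) := by
  simp only [← Complex.sq_norm]
  calc ‖∑ i ∈ s, f i‖ ^ 2 ≤ (∑ i ∈ s, ‖f i‖) ^ 2 := by gcongr; exact norm_sum_le s f
    _ ≤ s.card * ∑ i ∈ s, ‖f i‖ ^ 2 := sq_sum_le_card_mul_sum_sq

lemma frobSq_sum_le {ι m n : Type*} [Fintype m] [Fintype n] (s : Finset ι)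
    (M : ι → Matrix m n ℂ) : frobSq (∑ k ∈ s, M k) ≤ s.card * ∑ k ∈ s, frobSq (M k) :=
  calc frobSq (∑ k ∈ s, M k)
      ≤ ∑ i, ∑ j, (s.card : ℝ) * ∑ k ∈ s, Complex.normSq (M k i j) := by
        simp only [frobSq, Matrix.sum_apply]
        gcongr with i _ j _
        exact Complex.normSq_sum_le_card_mul s _
    _ = s.card * ∑ k ∈ s, frobSq (M k) := by
        simp only [frobSq, Finset.mul_sum]
        exact (Finset.sum_congr rfl fun _ _ => Finset.sum_comm).trans Finset.sum_comm

lemma frobSq_card_smul_sub_trace_smul_one {n : Type*} [Fintype n] [DecidableEq n]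
    (g : Matrix n n ℂ) :
    frobSq ((Fintype.card n : ℂ) • g - g.trace • 1)
      = Fintype.card n * (Fintype.card n * frobSq g - Complex.normSq g.trace) := by
  have entry (i j : n) : Complex.normSq (((Fintype.card n : ℂ) • g - g.trace • 1) i j)
      = Fintype.card n ^ 2 * Complex.normSq (g i j) + if i = j then
          Complex.normSq g.trace - 2 * Fintype.card n * (g i i * starRingEnd ℂ g.trace).re
        else 0 := by
    by_cases hij : i = j
    · subst hij
      simp only [Matrix.sub_apply, Matrix.smul_apply, one_apply_eq, smul_eq_mul, mul_one,
        if_true, Complex.normSq_sub, Complex.normSq_mul, Complex.normSq_natCast, mul_assoc]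
      rw [← Complex.ofReal_natCast, Complex.re_ofReal_mul]
      ring
    · simp [hij, Complex.normSq_mul, Complex.normSq_natCast, sq]
  have cross : ∑ i, (g i i * starRingEnd ℂ g.trace).re = Complex.normSq g.trace := by
    rw [← Complex.re_sum, ← Finset.sum_mul]
    exact congrArg Complex.re (Complex.mul_conj g.trace) |>.trans (Complex.ofReal_re _)
  simp only [frobSq, entry, Finset.sum_add_distrib, ← Finset.mul_sum, Finset.sum_ite_eq,
    Finset.mem_univ, if_true, Finset.sum_sub_distrib, Finset.sum_const, Finset.card_univ,
    nsmul_eq_mul, cross]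
  ring

def fstBlock {α κ R : Type*} (M : Matrix (α × κ) (α × κ) R) (a a' : α) : Matrix κ κ R :=
  of fun x y => M (a, x) (a', y)

def sndBlock {κ γ R : Type*} (M : Matrix (κ × γ) (κ × γ) R) (c c' : γ) : Matrix κ κ R :=
  of fun x y => M (x, c) (y, c')

lemma frobSq_eq_sum_fstBlock {α κ : Type*} [Fintype α] [Fintype κ]
    (M : Matrix (α × κ) (α × κ) ℂ) : frobSq M = ∑ a, ∑ a', frobSq (fstBlock M a a') := by
  simp only [frobSq, fstBlock, of_apply, Fintype.sum_prod_type]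
  exact Finset.sum_congr rfl fun _ _ => Finset.sum_comm

lemma frobSq_eq_sum_sndBlock {κ γ : Type*} [Fintype κ] [Fintype γ]
    (M : Matrix (κ × γ) (κ × γ) ℂ) : frobSq M = ∑ c, ∑ c', frobSq (sndBlock M c c') := by
  simp only [frobSq, sndBlock, of_apply, Fintype.sum_prod_type]
  exact Finset.sum_comm.trans <| Finset.sum_congr rfl fun _ _ =>
    (Finset.sum_congr rfl fun _ _ => Finset.sum_comm).trans Finset.sum_comm

lemma ptraceA_eq_sum_fstBlock {α κ : Type*} [Fintype α] (M : Matrix (α × κ) (α × κ) ℂ) :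
    ptraceA M = ∑ a, fstBlock M a a := by
  ext x y
  simp [ptraceA, fstBlock, Matrix.sum_apply]

lemma ptraceA_sum {ι α κ : Type*} [Fintype α] (s : Finset ι)
    (M : ι → Matrix (α × κ) (α × κ) ℂ) : ptraceA (∑ i ∈ s, M i) = ∑ i ∈ s, ptraceA (M i) := by
  ext x y
  simp only [ptraceA, of_apply, Matrix.sum_apply]
  exact Finset.sum_comm

lemma fstBlock_ptraceMid {α β γ : Type*} [Fintype β] (M : Matrix (α × β × γ) (α × β × γ) ℂ)
    (a a' : α) : fstBlock (ptraceMid M) a a' = ptraceA (fstBlock M a a') := rfl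

lemma Matrix.IsHermitian.ptraceA {α κ : Type*} [Fintype α] {M : Matrix (α × κ) (α × κ) ℂ}
    (hM : M.IsHermitian) : (ptraceA M).IsHermitian :=
  Matrix.IsHermitian.ext fun x y => by
    simp only [_root_.ptraceA, of_apply, star_sum, hM.apply]

lemma Matrix.IsHermitian.ptraceMid {α β γ : Type*} [Fintype β]
    {M : Matrix (α × β × γ) (α × β × γ) ℂ} (hM : M.IsHermitian) : (ptraceMid M).IsHermitian :=
  Matrix.IsHermitian.ext fun x y => by
    simp only [_root_.ptraceMid, of_apply, star_sum, hM.apply]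

noncomputable def twirlFst {κ γ : Type*} [Fintype κ] [DecidableEq κ]
    (σ : Matrix (κ × γ) (κ × γ) ℂ) : Matrix (κ × γ) (κ × γ) ℂ :=
  (Fintype.card κ : ℂ) • σ - (1 : Matrix κ κ ℂ) ⊗ₖ ptraceA σ

lemma twirlFst_sum {ι κ γ : Type*} [Fintype κ] [DecidableEq κ] (s : Finset ι)
    (σ : ι → Matrix (κ × γ) (κ × γ) ℂ) :
    twirlFst (∑ i ∈ s, σ i) = ∑ i ∈ s, twirlFst (σ i) := by
  simp only [twirlFst, ptraceA_sum, Finset.smul_sum, Finset.sum_sub_distrib]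
  congr 1
  ext x y
  simp [Matrix.sum_apply, Finset.mul_sum]

lemma sndBlock_twirlFst {κ γ : Type*} [Fintype κ] [DecidableEq κ]
    (σ : Matrix (κ × γ) (κ × γ) ℂ) (c c' : γ) :
    sndBlock (twirlFst σ) c c'
      = (Fintype.card κ : ℂ) • sndBlock σ c c' - (sndBlock σ c c').trace • 1 := by
  ext x y
  simp [twirlFst, sndBlock, _root_.ptraceA, Matrix.trace, mul_comm]

lemma frobSq_twirlFst {κ γ : Type*} [Fintype κ] [DecidableEq κ] [Fintype γ]
    (σ : Matrix (κ × γ) (κ × γ) ℂ) :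
    frobSq (twirlFst σ)
      = Fintype.card κ * (Fintype.card κ * frobSq σ - frobSq (ptraceA σ)) := by
  simp only [frobSq_eq_sum_sndBlock (twirlFst σ), frobSq_eq_sum_sndBlock σ, sndBlock_twirlFst,
    frobSq_card_smul_sub_trace_smul_one, Finset.mul_sum, Finset.sum_sub_distrib, mul_sub]
  simp only [frobSq, Finset.mul_sum]
  rfl

lemma card_mul_frobSq_ptraceA_sub_le {α β γ : Type*} [Fintype α] [Fintype β] [Fintype γ]
    (ρ : Matrix (α × β × γ) (α × β × γ) ℂ) :
    Fintype.card β * frobSq (ptraceA ρ) - frobSq (ptraceA (ptraceA ρ))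
      ≤ Fintype.card α * (Fintype.card β * frobSq ρ - frobSq (ptraceMid ρ)) := by
  classical
  rcases isEmpty_or_nonempty β with hβ | hβ
  · have hAC : frobSq (ptraceMid ρ) = 0 := by simp [frobSq, _root_.ptraceMid]
    simpa [hAC] using frobSq_nonneg (ptraceA (ptraceA ρ))
  refine le_of_mul_le_mul_left ?_ (Nat.cast_pos.mpr (Fintype.card_pos (α := β)))
  calc (Fintype.card β : ℝ)
        * (Fintype.card β * frobSq (ptraceA ρ) - frobSq (ptraceA (ptraceA ρ)))
      = frobSq (∑ a, twirlFst (fstBlock ρ a a)) := by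
        rw [← twirlFst_sum, ← ptraceA_eq_sum_fstBlock, frobSq_twirlFst]
    _ ≤ Fintype.card α * ∑ a, frobSq (twirlFst (fstBlock ρ a a)) := frobSq_sum_le _ _
    _ ≤ Fintype.card α * ∑ a, ∑ a', frobSq (twirlFst (fstBlock ρ a a')) := by
        gcongr with a
        exact Finset.single_le_sum (f := fun a' => frobSq (twirlFst (fstBlock ρ a a')))
          (fun _ _ => frobSq_nonneg _) (Finset.mem_univ a)
    _ = Fintype.card β
          * (Fintype.card α * (Fintype.card β * frobSq ρ - frobSq (ptraceMid ρ))) := by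
        simp only [frobSq_twirlFst, ← fstBlock_ptraceMid, ← Finset.mul_sum,
          Finset.sum_sub_distrib, ← frobSq_eq_sum_fstBlock]
        ring

theorem purity_ptraceMid_add_purity_ptraceA_le {α β γ : Type*} [Fintype α] [Fintype β]
    [Fintype γ] {ρ : Matrix (α × β × γ) (α × β × γ) ℂ} (hρ : ρ.IsHermitian) :
    Fintype.card α * purity (ptraceMid ρ) + Fintype.card β * purity (ptraceA ρ)
      ≤ Fintype.card α * Fintype.card β * purity ρ + purity (ptraceA (ptraceA ρ)) := by
  rw [hρ.purity_eq_frobSq, hρ.ptraceMid.purity_eq_frobSq, hρ.ptraceA.purity_eq_frobSq,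
    hρ.ptraceA.ptraceA.purity_eq_frobSq]
  linarith [card_mul_frobSq_ptraceA_sub_le ρ]

theorem dim_dependent_SSA_general
    (dA dB dC : ℕ) (hdA : 0 < dA) (hdB : 0 < dB)
    (ρ : Matrix (Fin dA × Fin dB × Fin dC) (Fin dA × Fin dB × Fin dC) ℂ)
    (hρ : IsDensity ρ) :
    (dA : ℝ) * dB * dC * purity ρ ≥
      (dA : ℝ) * dC * purity (ptraceMid ρ) + (dB : ℝ) * dC * purity (ptraceA ρ)
        - (dC : ℝ) * purity (ptraceA (ptraceA ρ)) ∧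
    linEnt ρ + (1 / ((dA : ℝ) * dB)) * linEnt (ptraceA (ptraceA ρ)) ≤
      (1 / (dB : ℝ)) * linEnt (ptraceMid ρ) + (1 / (dA : ℝ)) * linEnt (ptraceA ρ)
        + ((dA : ℝ) * dB + 1 - dA - dB) / ((dA : ℝ) * dB) := by
  have key := purity_ptraceMid_add_purity_ptraceA_le hρ.1.1
  simp only [Fintype.card_fin] at key
  constructor
  · linarith [mul_le_mul_of_nonneg_left key (Nat.cast_nonneg (α := ℝ) dC)]
  · have hA : (0 : ℝ) < dA := Nat.cast_pos.mpr hdA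
    have hB : (0 : ℝ) < dB := Nat.cast_pos.mpr hdB
    unfold linEnt
    field_simp
    linarith

theorem dim_dependent_SSA
    (dA dB dC : ℕ) (hdA : 0 < dA) (hdB : 0 < dB) (hdC : 0 < dC)
    (ρ : Matrix (Fin dA × Fin dB × Fin dC) (Fin dA × Fin dB × Fin dC) ℂ)
    (hρ : IsDensity ρ) :
    (dA : ℝ) * dB * dC * purity ρ ≥
      (dA : ℝ) * dC * purity (ptraceMid ρ) + (dB : ℝ) * dC * purity (ptraceA ρ)
        - (dC : ℝ) * purity (ptraceA (ptraceA ρ)) ∧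
    linEnt ρ + (1 / ((dA : ℝ) * dB)) * linEnt (ptraceA (ptraceA ρ)) ≤
      (1 / (dB : ℝ)) * linEnt (ptraceMid ρ) + (1 / (dA : ℝ)) * linEnt (ptraceA ρ)
        + ((dA : ℝ) * dB + 1 - dA - dB) / ((dA : ℝ) * dB) :=
  dim_dependent_SSA_general dA dB dC hdA hdB ρ hρ
end

section
/- For any bipartite density matrix ρ_AB on C^{d_A} ⊗ C^{d_B} with marginals ρ_A, ρ_B, one has Tr(ρ_AB²) ≥ (2/√(d_A d_B)) √(Tr(ρ_A²) Tr(ρ_B²)) − 1/(d_A d_B). -/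
open Matrix BigOperators Kronecker ComplexOrder

set_option linter.unusedSectionVars false

section helpers

variable {m p : Type*} [Fintype m] [Fintype p] [DecidableEq m] [DecidableEq p]

lemma trace_mul_kronB (ρ : Matrix (m × p) (m × p) ℂ) (M : Matrix m m ℂ) :
    (ρ * (M ⊗ₖ (1 : Matrix p p ℂ))).trace = (ptraceB ρ * M).trace := by
  simp only [Matrix.trace, Matrix.diag, Matrix.mul_apply, ptraceB, kroneckerMap_apply,
    Matrix.one_apply, Matrix.of_apply, Fintype.sum_prod_type, mul_ite, mul_one, mul_zero,
    Finset.sum_ite_eq, Finset.sum_ite_eq', Finset.mem_univ, if_true, Finset.sum_mul]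
  exact Finset.sum_congr rfl fun i _ => Finset.sum_comm

lemma trace_mul_kronA (ρ : Matrix (m × p) (m × p) ℂ) (M : Matrix p p ℂ) :
    (ρ * ((1 : Matrix m m ℂ) ⊗ₖ M)).trace = (ptraceA ρ * M).trace := by
  simp only [Matrix.trace, Matrix.diag, Matrix.mul_apply, ptraceA, kroneckerMap_apply,
    Matrix.one_apply, Matrix.of_apply, Fintype.sum_prod_type, mul_ite, mul_one, mul_zero,
    ite_mul, zero_mul, one_mul,
    Finset.sum_ite_eq, Finset.sum_ite_eq', Finset.mem_univ, if_true, Finset.sum_mul]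
  have step : ∀ (x : m) (x1 : p),
      (∑ x2 : m, ∑ x3 : p, if x2 = x then ρ (x, x1) (x2, x3) * M x3 x1 else 0)
        = ∑ x3 : p, ρ (x, x1) (x, x3) * M x3 x1 := by
    intro x x1
    rw [Finset.sum_comm]
    simp
  simp only [step]
  rw [Finset.sum_comm]
  exact Finset.sum_congr rfl fun k _ => Finset.sum_comm

lemma trace_ptraceB (ρ : Matrix (m × p) (m × p) ℂ) : (ptraceB ρ).trace = ρ.trace := by
  simp [Matrix.trace, ptraceB, Matrix.diag, Fintype.sum_prod_type]

lemma trace_ptraceA (ρ : Matrix (m × p) (m × p) ℂ) : (ptraceA ρ).trace = ρ.trace := by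
  simp only [Matrix.trace, ptraceA, Matrix.diag, Matrix.of_apply, Fintype.sum_prod_type]
  exact Finset.sum_comm

lemma ptraceB_herm {ρ : Matrix (m × p) (m × p) ℂ} (h : ρ.IsHermitian) :
    (ptraceB ρ).IsHermitian := by
  ext i j
  simp only [Matrix.conjTranspose_apply, ptraceB, Matrix.of_apply, star_sum]
  exact Finset.sum_congr rfl fun k _ => h.apply (i, k) (j, k)

lemma ptraceA_herm {ρ : Matrix (m × p) (m × p) ℂ} (h : ρ.IsHermitian) :
    (ptraceA ρ).IsHermitian := by
  ext i j
  simp only [Matrix.conjTranspose_apply, ptraceA, Matrix.of_apply, star_sum]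
  exact Finset.sum_congr rfl fun k _ => h.apply (k, i) (k, j)

lemma kron_herm {A : Matrix m m ℂ} {B : Matrix p p ℂ} (hA : A.IsHermitian)
    (hB : B.IsHermitian) : (A ⊗ₖ B).IsHermitian := by
  ext ⟨i, k⟩ ⟨j, l⟩
  simp only [Matrix.conjTranspose_apply, kroneckerMap_apply, star_mul']
  rw [hA.apply, hB.apply]

lemma herm_trace_sq_nonneg {n : Type*} [Fintype n] {H : Matrix n n ℂ} (h : H.IsHermitian) :
    0 ≤ ((H * H).trace).re := by
  have key : (H * H).trace = ∑ x : n, ∑ y : n, (Complex.normSq (H x y) : ℂ) := by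
    simp only [Matrix.trace, Matrix.diag, Matrix.mul_apply]
    refine Finset.sum_congr rfl fun x _ => Finset.sum_congr rfl fun y _ => ?_
    rw [← h.apply y x, Complex.star_def, Complex.mul_conj]
  rw [key, Complex.re_sum]
  simp only [Complex.re_sum, Complex.ofReal_re]
  exact Finset.sum_nonneg fun x _ => Finset.sum_nonneg fun y _ => Complex.normSq_nonneg _

end helpers

lemma purity_marginal_bound
    (dA dB : ℕ) (hdA : 0 < dA) (hdB : 0 < dB)
    (ρ : Matrix (Fin dA × Fin dB) (Fin dA × Fin dB) ℂ) (hρ : IsDensity ρ) :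
    purity ρ ≥ (dB : ℝ)⁻¹ * purity (ptraceB ρ) + (dA : ℝ)⁻¹ * purity (ptraceA ρ)
      - ((dA : ℝ) * (dB : ℝ))⁻¹ := by
  obtain ⟨hpsd, htr⟩ := hρ
  have hherm : ρ.IsHermitian := hpsd.1
  have hA := ptraceB_herm hherm
  have hB := ptraceA_herm hherm
  have htrA : (ptraceB ρ).trace = 1 := by rw [trace_ptraceB, htr]
  have htrB : (ptraceA ρ).trace = 1 := by rw [trace_ptraceA, htr]
  have hdA' : ((dA : ℂ)) ≠ 0 := by exact_mod_cast Nat.cast_ne_zero.mpr hdA.ne'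
  have hdB' : ((dB : ℂ)) ≠ 0 := by exact_mod_cast Nat.cast_ne_zero.mpr hdB.ne'
  set X : Matrix (Fin dA × Fin dB) (Fin dA × Fin dB) ℂ :=
    (dB : ℂ)⁻¹ • (ptraceB ρ ⊗ₖ (1 : Matrix (Fin dB) (Fin dB) ℂ)) with hX
  set Y : Matrix (Fin dA × Fin dB) (Fin dA × Fin dB) ℂ :=
    (dA : ℂ)⁻¹ • ((1 : Matrix (Fin dA) (Fin dA) ℂ) ⊗ₖ ptraceA ρ) with hY
  set Z : Matrix (Fin dA × Fin dB) (Fin dA × Fin dB) ℂ :=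
    ((dA : ℂ) * (dB : ℂ))⁻¹ • (1 : Matrix (Fin dA × Fin dB) (Fin dA × Fin dB) ℂ) with hZ
  have hsmul : ∀ (c : ℂ) (A : Matrix (Fin dA × Fin dB) (Fin dA × Fin dB) ℂ),
      star c = c → A.IsHermitian → (c • A).IsHermitian := by
    intro c A hc hA
    unfold Matrix.IsHermitian
    rw [Matrix.conjTranspose_smul, hc, hA]
  have hXh : X.IsHermitian := hsmul _ _ (by simp) (kron_herm hA Matrix.isHermitian_one)
  have hYh : Y.IsHermitian := hsmul _ _ (by simp) (kron_herm Matrix.isHermitian_one hB)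
  have hZh : Z.IsHermitian := hsmul _ _ (by simp) Matrix.isHermitian_one
  have hσ : (ρ - X - Y + Z).IsHermitian := ((hherm.sub hXh).sub hYh).add hZh
  have hpos := herm_trace_sq_nonneg hσ
  -- trace computations
  have e1 : (ρ * (ptraceB ρ ⊗ₖ (1 : Matrix (Fin dB) (Fin dB) ℂ))).trace
      = (ptraceB ρ * ptraceB ρ).trace := trace_mul_kronB ρ _
  have e1' : ((ptraceB ρ ⊗ₖ (1 : Matrix (Fin dB) (Fin dB) ℂ)) * ρ).trace
      = (ptraceB ρ * ptraceB ρ).trace := by rw [Matrix.trace_mul_comm]; exact e1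
  have e2 : (ρ * ((1 : Matrix (Fin dA) (Fin dA) ℂ) ⊗ₖ ptraceA ρ)).trace
      = (ptraceA ρ * ptraceA ρ).trace := trace_mul_kronA ρ _
  have e2' : (((1 : Matrix (Fin dA) (Fin dA) ℂ) ⊗ₖ ptraceA ρ) * ρ).trace
      = (ptraceA ρ * ptraceA ρ).trace := by rw [Matrix.trace_mul_comm]; exact e2
  have e3 : ((ptraceB ρ ⊗ₖ (1 : Matrix (Fin dB) (Fin dB) ℂ))
        * (ptraceB ρ ⊗ₖ (1 : Matrix (Fin dB) (Fin dB) ℂ))).trace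
      = (ptraceB ρ * ptraceB ρ).trace * (dB : ℂ) := by
    rw [← Matrix.mul_kronecker_mul, one_mul, Matrix.trace_kronecker, Matrix.trace_one]
    simp
  have e5 : (((1 : Matrix (Fin dA) (Fin dA) ℂ) ⊗ₖ ptraceA ρ)
        * ((1 : Matrix (Fin dA) (Fin dA) ℂ) ⊗ₖ ptraceA ρ)).trace
      = (dA : ℂ) * (ptraceA ρ * ptraceA ρ).trace := by
    rw [← Matrix.mul_kronecker_mul, one_mul, Matrix.trace_kronecker, Matrix.trace_one]
    simp
  have e4 : ((ptraceB ρ ⊗ₖ (1 : Matrix (Fin dB) (Fin dB) ℂ))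
        * ((1 : Matrix (Fin dA) (Fin dA) ℂ) ⊗ₖ ptraceA ρ)).trace = 1 := by
    rw [← Matrix.mul_kronecker_mul, one_mul, mul_one, Matrix.trace_kronecker, htrA, htrB, mul_one]
  have e4' : (((1 : Matrix (Fin dA) (Fin dA) ℂ) ⊗ₖ ptraceA ρ)
        * (ptraceB ρ ⊗ₖ (1 : Matrix (Fin dB) (Fin dB) ℂ))).trace = 1 := by
    rw [Matrix.trace_mul_comm]; exact e4
  have e6 : (ptraceB ρ ⊗ₖ (1 : Matrix (Fin dB) (Fin dB) ℂ)).trace = (dB : ℂ) := by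
    rw [Matrix.trace_kronecker, htrA, Matrix.trace_one]; simp
  have e7 : ((1 : Matrix (Fin dA) (Fin dA) ℂ) ⊗ₖ ptraceA ρ).trace = (dA : ℂ) := by
    rw [Matrix.trace_kronecker, htrB, Matrix.trace_one]; simp
  have e8 : (1 : Matrix (Fin dA × Fin dB) (Fin dA × Fin dB) ℂ).trace = (dA : ℂ) * (dB : ℂ) := by
    rw [Matrix.trace_one]; simp
  have key : (((ρ - X - Y + Z) * (ρ - X - Y + Z)).trace)
      = (ρ * ρ).trace - (dB : ℂ)⁻¹ * (ptraceB ρ * ptraceB ρ).trace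
        - (dA : ℂ)⁻¹ * (ptraceA ρ * ptraceA ρ).trace + ((dA : ℂ) * (dB : ℂ))⁻¹ := by
    simp only [hX, hY, hZ, sub_mul, mul_sub, add_mul, mul_add, Matrix.trace_sub,
      Matrix.trace_add, smul_mul_assoc, mul_smul_comm, smul_smul, Matrix.trace_smul,
      smul_eq_mul, mul_one, one_mul]
    rw [e1, e1', e2, e2', e3, e4, e4', e5, e6, e7, e8, htr]
    field_simp
    ring
  rw [key] at hpos
  have hre : ((ρ * ρ).trace - (dB : ℂ)⁻¹ * (ptraceB ρ * ptraceB ρ).trace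
        - (dA : ℂ)⁻¹ * (ptraceA ρ * ptraceA ρ).trace + ((dA : ℂ) * (dB : ℂ))⁻¹).re
      = purity ρ - (dB : ℝ)⁻¹ * purity (ptraceB ρ) - (dA : ℝ)⁻¹ * purity (ptraceA ρ)
        + ((dA : ℝ) * (dB : ℝ))⁻¹ := by
    have c1 : ((dB : ℂ))⁻¹ = (((dB : ℝ)⁻¹ : ℝ) : ℂ) := by push_cast; ring
    have c2 : ((dA : ℂ))⁻¹ = (((dA : ℝ)⁻¹ : ℝ) : ℂ) := by push_cast; ring
    have c3 : ((dA : ℂ) * (dB : ℂ))⁻¹ = ((((dA : ℝ) * (dB : ℝ))⁻¹ : ℝ) : ℂ) := by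
      push_cast; ring
    rw [c1, c2, c3]
    simp [purity, Complex.add_re, Complex.sub_re, Complex.re_ofReal_mul, Complex.ofReal_re]
  rw [hre] at hpos
  linarith

theorem purity_amgm_bound
    (dA dB : ℕ) (hdA : 0 < dA) (hdB : 0 < dB)
    (ρ : Matrix (Fin dA × Fin dB) (Fin dA × Fin dB) ℂ) (hρ : IsDensity ρ) :
    purity ρ ≥ (2 / Real.sqrt ((dA : ℝ) * dB)) *
      Real.sqrt (purity (ptraceB ρ) * purity (ptraceA ρ)) - 1 / ((dA : ℝ) * dB) := by
  have h1 := purity_marginal_bound dA dB hdA hdB ρ hρ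
  have ha0 : 0 ≤ purity (ptraceB ρ) := herm_trace_sq_nonneg (ptraceB_herm hρ.1.1)
  have hb0 : 0 ≤ purity (ptraceA ρ) := herm_trace_sq_nonneg (ptraceA_herm hρ.1.1)
  set a := purity (ptraceB ρ)
  set b := purity (ptraceA ρ)
  have hdA0 : (0 : ℝ) < dA := by exact_mod_cast hdA
  have hdB0 : (0 : ℝ) < dB := by exact_mod_cast hdB
  have hAB : (0 : ℝ) < (dA : ℝ) * dB := by positivity
  set t := Real.sqrt ((dA : ℝ) * dB) with ht
  set s := Real.sqrt (a * b) with hs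
  have ht0 : 0 < t := Real.sqrt_pos.mpr hAB
  have ht2 : t ^ 2 = (dA : ℝ) * dB := Real.sq_sqrt hAB.le
  have hs0 : 0 ≤ s := Real.sqrt_nonneg _
  have hs2 : s ^ 2 = a * b := Real.sq_sqrt (by positivity)
  have hst : 2 * s * t ≤ a * (dA : ℝ) + b * dB := by
    nlinarith [sq_nonneg (a * (dA : ℝ) - b * dB), sq_nonneg (s * t - a * dA),
      sq_nonneg (s * t - b * dB), mul_nonneg hs0 ht0.le, mul_nonneg ha0 hdA0.le,
      mul_nonneg hb0 hdB0.le]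
  have h2 : 2 / t * s ≤ (dB : ℝ)⁻¹ * a + (dA : ℝ)⁻¹ * b := by
    rw [div_mul_eq_mul_div, div_le_iff₀ ht0]
    have hexp : ((dB : ℝ)⁻¹ * a + (dA : ℝ)⁻¹ * b) * t * t
        = ((dB : ℝ)⁻¹ * a + (dA : ℝ)⁻¹ * b) * ((dA : ℝ) * dB) := by
      rw [mul_assoc, ← sq, ht2]
    have hexp2 : ((dB : ℝ)⁻¹ * a + (dA : ℝ)⁻¹ * b) * ((dA : ℝ) * dB)
        = a * (dA : ℝ) + b * dB := by
      have hinvA : (dA : ℝ)⁻¹ * dA = 1 := inv_mul_cancel₀ hdA0.ne'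
      have hinvB : (dB : ℝ)⁻¹ * dB = 1 := inv_mul_cancel₀ hdB0.ne'
      linear_combination a * (dA : ℝ) * hinvB + b * (dB : ℝ) * hinvA
    nlinarith [hst, ht0, hexp, hexp2]
  have h3 : (1 : ℝ) / ((dA : ℝ) * dB) = ((dA : ℝ) * (dB : ℝ))⁻¹ := one_div _
  linarith
end

section
/- For any density matrix ρ on C^{d_A} ⊗ C^{d_B}, S_L(ρ_AB) ≤ S_L(ρ_A) + S_L(ρ_B) (subadditivity of the linear entropy, q = 2 Tsallis entropy), where S_L(ρ) = 1 − Tr(ρ²). -/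
/-!
Let `F_A`, `F_B` swap the `A`- resp. `B`-factors of two copies of the system; then
`Tr((ρ ⊗ ρ) F_A) = Tr ρ_A²`, `Tr((ρ ⊗ ρ) F_B) = Tr ρ_B²` and `Tr((ρ ⊗ ρ) F_A F_B) = Tr ρ²`
(here `ρ_A = ptraceB ρ`, `ρ_B = ptraceA ρ`). As `F_A`, `F_B` are commuting Hermitian
involutions, `P = (1 - F_A)(1 - F_B)` satisfies `Pᴴ P = 4 P`, so `P` is positive semidefinite and
`0 ≤ Tr((ρ ⊗ ρ) P) = (Tr ρ)² - Tr ρ_A² - Tr ρ_B² + Tr ρ²`.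
-/

open Matrix BigOperators Kronecker ComplexOrder

theorem star_mul_self_one_sub_mul_one_sub {R : Type*} [Ring R] [StarRing R] {F G : R}
    (hF : IsSelfAdjoint F) (hG : IsSelfAdjoint G) (hFF : F * F = 1) (hGG : G * G = 1)
    (hFG : Commute F G) :
    star ((1 - F) * (1 - G)) * ((1 - F) * (1 - G)) = 4 * ((1 - F) * (1 - G)) := by
  have idem {E : R} (hE : E * E = 1) : (1 - E) * (1 - E) = 2 * (1 - E) := by
    rw [two_mul]; noncomm_ring; rw [hE]; abel
  have hcomm : Commute (1 - G) (1 - F) :=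
    (Commute.one_right _).sub_right ((Commute.one_left F).sub_left hFG.symm)
  calc star ((1 - F) * (1 - G)) * ((1 - F) * (1 - G))
      = (1 - G) * (1 - F) * ((1 - F) * (1 - G)) := by
        simp only [star_mul, star_sub, star_one, hF.star_eq, hG.star_eq]
    _ = (1 - F) * (1 - F) * ((1 - G) * (1 - G)) := by
        rw [hcomm.eq]; simp only [mul_assoc]; rw [← mul_assoc (1 - G), hcomm.eq, mul_assoc]
    _ = 4 * ((1 - F) * (1 - G)) := by
        rw [idem hFF, idem hGG]; noncomm_ring

namespace Matrix

variable {m n R : Type*}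

section Permutation

variable [DecidableEq n] [NonAssocSemiring R]

theorem isHermitian_permMatrix [StarRing R] {σ : Equiv.Perm n} (hσ : σ * σ = 1) :
    (σ.permMatrix R).IsHermitian := by
  rw [IsHermitian, conjTranspose_permMatrix, inv_eq_of_mul_eq_one_right hσ]

variable [Fintype n]

theorem trace_mul_permMatrix (M : Matrix n n R) (σ : Equiv.Perm n) :
    (M * σ.permMatrix R).trace = ∑ i, M i (σ⁻¹ i) := by
  simp [trace, mul_apply, PEquiv.toMatrix_apply, Equiv.Perm.inv_def, ← Equiv.eq_symm_apply]

theorem permMatrix_mul_self {σ : Equiv.Perm n} (hσ : σ * σ = 1) :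
    σ.permMatrix R * σ.permMatrix R = 1 := by
  rw [← permMatrix_mul, hσ, permMatrix_one]

theorem commute_permMatrix {σ τ : Equiv.Perm n} (h : Commute σ τ) :
    Commute (σ.permMatrix R) (τ.permMatrix R) := by
  rw [Commute, SemiconjBy, ← permMatrix_mul, ← permMatrix_mul, h.eq]

end Permutation

variable [Fintype m] [Fintype n]

theorem PosSemidef.trace_mul_conjTranspose_mul_self_nonneg {X : Matrix n n ℂ}
    (hX : X.PosSemidef) (H : Matrix m n ℂ) : 0 ≤ (X * (Hᴴ * H)).trace := by
  rw [← Matrix.mul_assoc, trace_mul_comm]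
  simpa only [Matrix.mul_assoc] using (hX.mul_mul_conjTranspose_same H).trace_nonneg

theorem PosSemidef.trace_mul_add_trace_mul_le [DecidableEq n] {X F G : Matrix n n ℂ}
    (hX : X.PosSemidef) (hF : F.IsHermitian) (hG : G.IsHermitian) (hFF : F * F = 1)
    (hGG : G * G = 1) (hFG : Commute F G) :
    (X * F).trace + (X * G).trace ≤ X.trace + (X * (F * G)).trace := by
  set H := (1 - F) * (1 - G)
  have hgram : 0 ≤ (4 : ℂ) * (X * H).trace := by
    have h := hX.trace_mul_conjTranspose_mul_self_nonneg H
    rwa [show Hᴴ * H = 4 * H from star_mul_self_one_sub_mul_one_sub hF hG hFF hGG hFG,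
      ← diagonal_ofNat, ← smul_eq_diagonal_mul, Matrix.mul_smul, trace_smul, smul_eq_mul] at h
  have hH : 0 ≤ (X * H).trace := by
    simpa using mul_nonneg (inv_nonneg.mpr zero_le_four) hgram
  have hexpand :
      (X * H).trace = X.trace + (X * (F * G)).trace - ((X * F).trace + (X * G).trace) := by
    simp only [H, mul_sub, sub_mul, one_mul, mul_one, trace_sub]
    ring
  rwa [hexpand, sub_nonneg] at hH

end Matrix

section Swaps

variable {α β : Type*}

@[simps]
def swapFst : Equiv.Perm ((α × β) × (α × β)) where
  toFun p := ((p.2.1, p.1.2), (p.1.1, p.2.2))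
  invFun p := ((p.2.1, p.1.2), (p.1.1, p.2.2))

@[simps]
def swapSnd : Equiv.Perm ((α × β) × (α × β)) where
  toFun p := ((p.1.1, p.2.2), (p.2.1, p.1.2))
  invFun p := ((p.1.1, p.2.2), (p.2.1, p.1.2))

theorem swapFst_mul_self : swapFst * swapFst = (1 : Equiv.Perm ((α × β) × (α × β))) :=
  Equiv.ext fun _ => rfl

theorem swapSnd_mul_self : swapSnd * swapSnd = (1 : Equiv.Perm ((α × β) × (α × β))) :=
  Equiv.ext fun _ => rfl

theorem commute_swapFst_swapSnd : Commute (swapFst : Equiv.Perm ((α × β) × (α × β))) swapSnd :=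
  Equiv.ext fun _ => rfl

variable [Fintype α] [Fintype β] [DecidableEq α] [DecidableEq β]

theorem trace_kronecker_mul_permMatrix_swapFst (ρ : Matrix (α × β) (α × β) ℂ) :
    ((ρ ⊗ₖ ρ) * swapFst.permMatrix ℂ).trace = (ptraceB ρ * ptraceB ρ).trace := by
  rw [trace_mul_permMatrix, ← (Equiv.prodProdProdComm α α β β).sum_comp]
  simp [Equiv.Perm.inv_def, Fintype.sum_prod_type, trace, mul_apply, ptraceB,
    Finset.sum_mul_sum]

theorem trace_kronecker_mul_permMatrix_swapSnd (ρ : Matrix (α × β) (α × β) ℂ) :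
    ((ρ ⊗ₖ ρ) * swapSnd.permMatrix ℂ).trace = (ptraceA ρ * ptraceA ρ).trace := by
  rw [trace_mul_permMatrix, ← (Equiv.prodProdProdComm α α β β).sum_comp,
    ← (Equiv.prodComm _ _).sum_comp]
  simp [Equiv.Perm.inv_def, Fintype.sum_prod_type, trace, mul_apply, ptraceA,
    Finset.sum_mul_sum]

theorem trace_kronecker_mul_permMatrix_swapSnd_mul_swapFst (ρ : Matrix (α × β) (α × β) ℂ) :
    ((ρ ⊗ₖ ρ) * (swapSnd * swapFst).permMatrix ℂ).trace = (ρ * ρ).trace := by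
  rw [trace_mul_permMatrix]
  simp [Equiv.Perm.inv_def, Fintype.sum_prod_type, trace, mul_apply]

theorem Matrix.PosSemidef.trace_ptraceB_sq_add_trace_ptraceA_sq_le
    {ρ : Matrix (α × β) (α × β) ℂ} (hρ : ρ.PosSemidef) :
    (ptraceB ρ * ptraceB ρ).trace + (ptraceA ρ * ptraceA ρ).trace ≤
      ρ.trace ^ 2 + (ρ * ρ).trace := by
  have key := (hρ.kronecker hρ).trace_mul_add_trace_mul_le
    (isHermitian_permMatrix swapFst_mul_self) (isHermitian_permMatrix swapSnd_mul_self)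
    (permMatrix_mul_self swapFst_mul_self) (permMatrix_mul_self swapSnd_mul_self)
    (commute_permMatrix commute_swapFst_swapSnd)
  rwa [trace_kronecker_mul_permMatrix_swapFst, trace_kronecker_mul_permMatrix_swapSnd,
    ← permMatrix_mul, trace_kronecker_mul_permMatrix_swapSnd_mul_swapFst, trace_kronecker,
    ← sq ρ.trace] at key

end Swaps

theorem linear_entropy_subadditivity_general
    (dA dB : ℕ)
    (ρ : Matrix (Fin dA × Fin dB) (Fin dA × Fin dB) ℂ) (hρ : IsDensity ρ) :
    linEnt ρ ≤ linEnt (ptraceB ρ) + linEnt (ptraceA ρ) := by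
  obtain ⟨hpsd, htr⟩ := hρ
  have h := hpsd.trace_ptraceB_sq_add_trace_ptraceA_sq_le
  rw [htr, one_pow] at h
  have hre := (Complex.le_def.mp h).1
  simp only [Complex.add_re, Complex.one_re] at hre
  simp only [linEnt, purity]
  linarith

theorem linear_entropy_subadditivity
    (dA dB : ℕ) (hdA : 0 < dA) (hdB : 0 < dB)
    (ρ : Matrix (Fin dA × Fin dB) (Fin dA × Fin dB) ℂ) (hρ : IsDensity ρ) :
    linEnt ρ ≤ linEnt (ptraceB ρ) + linEnt (ptraceA ρ) :=
  linear_entropy_subadditivity_general dA dB ρ hρ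
end
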